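/- Deterministic core of the privacy of Mul-SAN: fix a finite field F_q, the signer's inversion maps (S⁻¹, F_inv, T⁻¹), the sanitizer's inversion maps (Q⁻¹, X_inv, Y⁻¹), a hash function H, the admissible-modification description AD, and the public keys pk_sign, pk_sanit. Let (msg₀, MODIFY₀) and (msg₁, MODIFY₁) be two message–modification pairs such that the fixed parts agree, FIXED_AD(msg₀) = FIXED_AD(msg₁), and the modified messages agree, MODIFY₀(msg₀) = MODIFY₁(msg₁). Then the sanitized message–signature pair output by Mul-SAN.Sanitization applied to Mul-SAN.Signature(msg₀, ·, ·, AD) with modification MODIFY₀ is identical to the one output for msg₁ with modification MODIFY₁; in particular the output reveals nothing about which of the two original messages was sanitized. -/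

import Mathlib

/-! Sanitization discards the signer's `σ₂` and keeps only `σ₁`, which depends on the message
only through its fixed part; everything else it outputs depends on the message only through
the modified message. -/

/-- Mul-SAN.Signature as a deterministic function: given the signer's inversion maps
`Sinv`, `F_inv`, `Tinv`, hash functions `H0` (digest of `0 ∥ FIXED_AD(msg) ∥ AD ∥ pk_sanit`)
and `H1` (digest of `1 ∥ msg ∥ pk_sanit ∥ pk_sign`), the fixed-part extractor `FIXED`,
the admissible-modification description `AD` and the public keys, it outputs the pair
`(σ₁, σ₂)`. -/
def mulSANSign {Fq : Type*} {m n : ℕ} {Msg ADt PK : Type*}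
    (Sinv : (Fin m → Fq) → (Fin m → Fq))
    (F_inv : (Fin m → Fq) → (Fin n → Fq))
    (Tinv : (Fin n → Fq) → (Fin n → Fq))
    (H0 : Msg → ADt → PK → (Fin m → Fq))
    (H1 : Msg → PK → PK → (Fin m → Fq))
    (FIXED : Msg → Msg) (AD : ADt) (pk_sign pk_sanit : PK)
    (msg : Msg) : (Fin n → Fq) × (Fin n → Fq) :=
  (Tinv (F_inv (Sinv (H0 (FIXED msg) AD pk_sanit))),
   Tinv (F_inv (Sinv (H1 msg pk_sanit pk_sign))))

/-- Mul-SAN.Sanitization as a deterministic function: it outputs the modified message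
`MODIFY msg` together with the sanitized signature `(σ₁, σ₂')`, keeping the first
component of `σ` unchanged and recomputing the second one from scratch with the
sanitizer's inversion maps `Qinv`, `X_inv`, `Yinv`. -/
def mulSANSanitize {Fq : Type*} {m n : ℕ} {Msg PK : Type*}
    (Qinv : (Fin m → Fq) → (Fin m → Fq))
    (X_inv : (Fin m → Fq) → (Fin n → Fq))
    (Yinv : (Fin n → Fq) → (Fin n → Fq))
    (H1 : Msg → PK → PK → (Fin m → Fq))
    (pk_sign pk_sanit : PK)
    (msg : Msg) (MODIFY : Msg → Msg)
    (σ : (Fin n → Fq) × (Fin n → Fq)) :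
    Msg × ((Fin n → Fq) × (Fin n → Fq)) :=
  (MODIFY msg,
    (σ.1, Yinv (X_inv (Qinv (H1 (MODIFY msg) pk_sanit pk_sign)))))

theorem mulSANSign_fst_eq_of_fixed_eq {Fq : Type*} {m n : ℕ} {Msg ADt PK : Type*}
    {Sinv : (Fin m → Fq) → (Fin m → Fq)} {F_inv : (Fin m → Fq) → (Fin n → Fq)}
    {Tinv : (Fin n → Fq) → (Fin n → Fq)} {H0 : Msg → ADt → PK → (Fin m → Fq)}
    {H1 : Msg → PK → PK → (Fin m → Fq)} {FIXED : Msg → Msg} {AD : ADt} {pk_sign pk_sanit : PK}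
    {msg msg' : Msg} (h : FIXED msg = FIXED msg') :
    (mulSANSign Sinv F_inv Tinv H0 H1 FIXED AD pk_sign pk_sanit msg).1 =
      (mulSANSign Sinv F_inv Tinv H0 H1 FIXED AD pk_sign pk_sanit msg').1 := by
  rw [mulSANSign, mulSANSign, h]

theorem mulSANSanitize_eq_of_fst_eq {Fq : Type*} {m n : ℕ} {Msg PK : Type*}
    {Qinv : (Fin m → Fq) → (Fin m → Fq)} {X_inv : (Fin m → Fq) → (Fin n → Fq)}
    {Yinv : (Fin n → Fq) → (Fin n → Fq)} {H1 : Msg → PK → PK → (Fin m → Fq)}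
    {pk_sign pk_sanit : PK} {msg msg' : Msg} {MODIFY MODIFY' : Msg → Msg}
    {σ σ' : (Fin n → Fq) × (Fin n → Fq)}
    (hσ : σ.1 = σ'.1) (hmod : MODIFY msg = MODIFY' msg') :
    mulSANSanitize Qinv X_inv Yinv H1 pk_sign pk_sanit msg MODIFY σ =
      mulSANSanitize Qinv X_inv Yinv H1 pk_sign pk_sanit msg' MODIFY' σ' := by
  simp only [mulSANSanitize, hσ, hmod]

theorem mulSAN_privacy_core_general
    (Fq : Type*) (m n : ℕ)
    (Msg ADt PK : Type*)
    (Sinv Qinv : (Fin m → Fq) → (Fin m → Fq))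
    (F_inv X_inv : (Fin m → Fq) → (Fin n → Fq))
    (Tinv Yinv : (Fin n → Fq) → (Fin n → Fq))
    (H0 : Msg → ADt → PK → (Fin m → Fq))
    (H1 : Msg → PK → PK → (Fin m → Fq))
    (FIXED : Msg → Msg) (AD : ADt) (pk_sign pk_sanit : PK)
    (msg₀ msg₁ : Msg) (MODIFY₀ MODIFY₁ : Msg → Msg)
    (hfix : FIXED msg₀ = FIXED msg₁)
    (hmod : MODIFY₀ msg₀ = MODIFY₁ msg₁) :
    mulSANSanitize Qinv X_inv Yinv H1 pk_sign pk_sanit msg₀ MODIFY₀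
      (mulSANSign Sinv F_inv Tinv H0 H1 FIXED AD pk_sign pk_sanit msg₀) =
    mulSANSanitize Qinv X_inv Yinv H1 pk_sign pk_sanit msg₁ MODIFY₁
      (mulSANSign Sinv F_inv Tinv H0 H1 FIXED AD pk_sign pk_sanit msg₁) :=
  mulSANSanitize_eq_of_fst_eq (mulSANSign_fst_eq_of_fixed_eq hfix) hmod

/-- Deterministic core of the privacy of Mul-SAN: if two message–modification pairs
`(msg₀, MODIFY₀)` and `(msg₁, MODIFY₁)` have the same fixed part
(`FIXED msg₀ = FIXED msg₁`) and the same modified message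
(`MODIFY₀ msg₀ = MODIFY₁ msg₁`), then sanitizing the signature of `msg₀` with
`MODIFY₀` yields exactly the same sanitized message–signature pair as sanitizing the
signature of `msg₁` with `MODIFY₁`. -/
theorem mulSAN_privacy_core
    (Fq : Type*) [Field Fq] [Fintype Fq] (m n : ℕ)
    (Msg ADt PK : Type*)
    (Sinv Qinv : (Fin m → Fq) → (Fin m → Fq))
    (F_inv X_inv : (Fin m → Fq) → (Fin n → Fq))
    (Tinv Yinv : (Fin n → Fq) → (Fin n → Fq))
    (H0 : Msg → ADt → PK → (Fin m → Fq))
    (H1 : Msg → PK → PK → (Fin m → Fq))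
    (FIXED : Msg → Msg) (AD : ADt) (pk_sign pk_sanit : PK)
    (msg₀ msg₁ : Msg) (MODIFY₀ MODIFY₁ : Msg → Msg)
    (hfix : FIXED msg₀ = FIXED msg₁)
    (hmod : MODIFY₀ msg₀ = MODIFY₁ msg₁) :
    mulSANSanitize Qinv X_inv Yinv H1 pk_sign pk_sanit msg₀ MODIFY₀
      (mulSANSign Sinv F_inv Tinv H0 H1 FIXED AD pk_sign pk_sanit msg₀) =
    mulSANSanitize Qinv X_inv Yinv H1 pk_sign pk_sanit msg₁ MODIFY₁
      (mulSANSign Sinv F_inv Tinv H0 H1 FIXED AD pk_sign pk_sanit msg₁) :=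
  mulSAN_privacy_core_general Fq m n Msg ADt PK Sinv Qinv F_inv X_inv Tinv Yinv H0 H1 FIXED AD
    pk_sign pk_sanit msg₀ msg₁ MODIFY₀ MODIFY₁ hfix hmod
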